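/- Let α be a right-maximal repeat of w with occurrence positions sorted as i₁ < ... < i_k, and define f(i_j) := max { i_{j'} : i_{j'} ≤ i_j + |α| − 1 }. If for some j ≥ 2 we have f(i_{j−1}) = f(i_j) with i_{j−1} ≠ i_j, then the occurrence of α at i_{j−1} contains the prefix w[i_j..i_j+m−1] of α twice for every m ≤ i_{j−1} + |α| − i_j, and hence by the containment criterion no prefix β of α of length at most i_{j−1} + |α| − i_j with β occurring as a prefix of α and elsewhere inside α is α-extendable. -/
import Mathlib


open Set List

variable {A : Type*}

/-- `β` occurs in `w` at (0-indexed) position `i`, i.e. `w[i..i+|β|-1] = β`. -/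
def OccursAt (w β : List A) (i : ℕ) : Prop := β <+: w.drop i

/-- A repeat of `w`: a nonempty string occurring in `w` at two distinct positions. -/
def IsRepeat (w β : List A) : Prop :=
  β ≠ [] ∧ ∃ i j, i ≠ j ∧ OccursAt w β i ∧ OccursAt w β j

/-- A right-maximal repeat of `w`: a repeat with two occurrences whose right-adjacent
characters differ.  The right-adjacent character of the occurrence at `i` is
`w[i+|β|]?  : Option A`; the value `none` (an occurrence at the right end of `w`)
plays the role of the special character distinct from all alphabet characters. -/
def IsRMRepeat (w β : List A) : Prop :=
  β ≠ [] ∧ ∃ i j, i ≠ j ∧ OccursAt w β i ∧ OccursAt w β j ∧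
    w[i + β.length]? ≠ w[j + β.length]?

/-- `RightExtClosure w β α` says that `α = r(β)`, the right-maximal repeat obtained
from `β` by repeatedly appending the unique common right-adjacent character of all
of its occurrences: equivalently, `α` is a right-maximal repeat of `w` extending `β`
such that no intermediate extension `γ` (with `β ≤ γ < α`) is already right-maximal. -/
def RightExtClosure (w β α : List A) : Prop :=
  IsRMRepeat w α ∧ β <+: α ∧
    ∀ γ, β <+: γ → γ <+: α → γ ≠ α → ¬ IsRMRepeat w γ

/-- If `l₁` is a prefix of `l₂` and the next element of `l₂` is `a`,
then `l₁ ++ [a]` is a prefix of `l₂`. -/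
lemma prefix_snoc_of_getElem? {l₁ l₂ : List A} {a : A} (h : l₁ <+: l₂)
    (h2 : l₂[l₁.length]? = some a) : l₁ ++ [a] <+: l₂ := by
  obtain ⟨r, rfl⟩ := h
  rw [List.getElem?_append, if_neg (by omega), Nat.sub_self] at h2
  cases r with
  | nil => simp at h2
  | cons b r' =>
    simp only [List.getElem?_cons_zero, Option.some.injEq] at h2
    subst h2
    exact ⟨r', by simp⟩

/-- Key step: if `β` occurs inside `α` at a positive offset `d` (in addition to being
a prefix), and `α = r(β)`, then any occurrence of `α` at `s` forces an occurrence of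
`α` at `s + d`. -/
lemma occ_step {w β α : List A} {d : ℕ} (hd : 1 ≤ d)
    (hβ : β ≠ []) (hβd : β <+: α.drop d)
    (hcl : RightExtClosure w β α)
    {s : ℕ} (hs : OccursAt w α s) : OccursAt w α (s + d) := by
  obtain ⟨hrm, hβα, hint⟩ := hcl
  have hm1 : 1 ≤ β.length := List.length_pos_iff.mpr hβ
  have hdlen : d + β.length ≤ α.length := by
    have h1 := hβd.length_le
    have h2 : d ≤ α.length := by
      by_contra h
      simp [List.drop_eq_nil_of_le (le_of_not_ge h)] at hβd
      exact hβ hβd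
    simp only [List.length_drop] at h1
    omega
  have hβtake : β = α.take β.length := List.prefix_iff_eq_take.mp hβα
  -- occurrence of α.drop d at s + d
  have hdrop : α.drop d <+: w.drop (s + d) := by
    have := hs.drop d
    rwa [List.drop_drop] at this
  have key : ∀ t, t ≤ α.length → β.length ≤ t → α.take t <+: w.drop (s + d) := by
    intro t
    induction t with
    | zero => intro _ h; omega
    | succ t ih =>
      intro ht hβt
      rcases Nat.lt_or_ge t β.length with hlt | hge
      · -- base case: t + 1 = β.length
        have he : t + 1 = β.length := by omega
        rw [he, ← hβtake]
        exact hβd.trans hdrop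
      · have hγ := ih (by omega) hge
        have htlt : t < α.length := ht
        set γ := α.take t with hγdef
        have hγlen : γ.length = t := by simp [hγdef, Nat.min_eq_left (le_of_lt htlt)]
        have hγne : γ ≠ [] := by
          intro h
          rw [h] at hγlen
          simp at hγlen
          omega
        have hγocc_s : OccursAt w γ s := (List.take_prefix t α).trans hs
        have hγocc_sd : OccursAt w γ (s + d) := hγ
        have hnrm : ¬ IsRMRepeat w γ :=
          hint γ (by
              have hβγ : β = γ.take β.length := by
                rw [hγdef, List.take_take, Nat.min_eq_left hge, ← hβtake]
              exact hβγ ▸ List.take_prefix _ _)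
            (List.take_prefix t α)
            (by intro h; have := congrArg List.length h; rw [hγlen] at this; omega)
        have hsame : w[s + γ.length]? = w[s + d + γ.length]? := by
          by_contra hne
          exact hnrm ⟨hγne, s, s + d, by omega, hγocc_s, hγocc_sd, hne⟩
        -- the next character after γ at position s is α[t]
        obtain ⟨r, hr⟩ := hs
        have hwst : w[s + t]? = some α[t] := by
          rw [← List.getElem?_drop, ← hr, List.getElem?_append, if_pos htlt,
            List.getElem?_eq_getElem htlt]
        rw [hγlen] at hsame
        have hwsdt : (w.drop (s + d))[t]? = some α[t] := by
          rw [List.getElem?_drop, ← hsame]; exact hwst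
        have := prefix_snoc_of_getElem? hγocc_sd (by rw [hγlen]; exact hwsdt)
        have heq : α.take (t + 1) = γ ++ [α[t]] := by
          rw [List.take_succ, List.getElem?_eq_getElem htlt, Option.toList_some, hγdef]
        rw [heq]
        exact this
  have := key α.length le_rfl (by omega)
  rwa [List.take_length] at this

/-- Containment criterion: if `α` contains its prefix `β` a second time at a positive
offset `d`, then `β` is not `α`-extendable. -/
lemma not_closure_of_inner_occ {w β α : List A} {d : ℕ} (hd : 1 ≤ d)
    (hβ : β ≠ []) (hβd : β <+: α.drop d)
    (hcl : RightExtClosure w β α) : False := by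
  obtain ⟨hαne, i, j, _, hi, _⟩ := hcl.1
  have hall : ∀ k : ℕ, OccursAt w α (i + k * d) := by
    intro k
    induction k with
    | zero => simpa using hi
    | succ k ih =>
      have := occ_step hd hβ hβd hcl ih
      rwa [Nat.succ_mul, ← Nat.add_assoc]
  have h1 := (hall (w.length + 1)).length_le
  simp only [List.length_drop] at h1
  have hαlen : 1 ≤ α.length := List.length_pos_iff.mpr hαne
  have : w.length + 1 ≤ (w.length + 1) * d := Nat.le_mul_of_pos_right _ (by omega)
  omega

/-- let `α` be a right-maximal repeat of `w` occurring at positions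
`p < q`, and suppose `f(p) = f(q) = F` where `f(i)` is the largest occurrence position
`≤ i + |α| − 1`.  Then the occurrence of `α` at `p` contains the prefix of `α` of length
`m` twice (once as its own prefix and once at offset `q − p`) for every
`1 ≤ m ≤ p + |α| − q`, and hence no nonempty prefix `β` of `α` of length at most
`p + |α| − q` is `α`-extendable. -/
theorem not_extendable_of_equal_forward (w α : List A) (p q F : ℕ)
    (hα : IsRMRepeat w α)
    (hp : OccursAt w α p) (hq : OccursAt w α q) (hpq : p < q)
    (hF : OccursAt w α F)
    (hFp : F ≤ p + α.length - 1) (hmaxp : ∀ k, OccursAt w α k → k ≤ p + α.length - 1 → k ≤ F)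
    (hFq : F ≤ q + α.length - 1) (hmaxq : ∀ k, OccursAt w α k → k ≤ q + α.length - 1 → k ≤ F) :
    (∀ m, 1 ≤ m → m ≤ p + α.length - q →
      α.take m <+: α ∧ α.take m <+: α.drop (q - p)) ∧
    (∀ β, β <+: α → β ≠ [] → β.length ≤ p + α.length - q →
      ¬ RightExtClosure w β α) := by
  have hαlen : 1 ≤ α.length := List.length_pos_iff.mpr hα.1
  have hqF : q ≤ F := hmaxq q hq (by omega)
  have hqp : q ≤ p + α.length - 1 := le_trans hqF hFp
  have part1 : ∀ m, 1 ≤ m → m ≤ p + α.length - q →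
      α.take m <+: α ∧ α.take m <+: α.drop (q - p) := by
    intro m _ hm2
    refine ⟨List.take_prefix m α, ?_⟩
    -- both are prefixes of w.drop q
    have h1 : α.take m <+: w.drop q := (List.take_prefix m α).trans hq
    have h2 : α.drop (q - p) <+: w.drop q := by
      have := hp.drop (q - p)
      rwa [List.drop_drop, Nat.add_sub_cancel' (le_of_lt hpq)] at this
    refine List.prefix_of_prefix_length_le h1 h2 ?_
    simp only [List.length_take, List.length_drop]
    omega
  refine ⟨part1, ?_⟩
  intro β hβα hβne hβlen hcl
  have hm1 : 1 ≤ β.length := List.length_pos_iff.mpr hβne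
  have hβd : β <+: α.drop (q - p) := by
    have := (part1 β.length hm1 hβlen).2
    rwa [← List.prefix_iff_eq_take.mp hβα] at this
  exact not_closure_of_inner_occ (by omega) hβne hβd hcl
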